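/- If 𝒥^lin_{n,3} = 𝒥_{n,3} for every n ≥ 1, then 𝒥^lin_{n,d} = 𝒥_{n,d} for every n ≥ 1 and every d ≥ 1; that is, if every polynomial system of total degree at most 3 (in any number of variables) with constant nonzero Jacobian determinant is invertible with polynomial inverse, then the same holds for polynomial systems of arbitrary degree. -/

import Mathlib

open MvPolynomial

/-- The Jacobian determinant of a polynomial system `F : ℂⁿ → ℂⁿ`,
as a polynomial: `det (∂F_j/∂z_i)_{i,j}`. -/
noncomputable def jacDet {n : ℕ} (F : Fin n → MvPolynomial (Fin n) ℂ) :
    MvPolynomial (Fin n) ℂ :=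
  Matrix.det (Matrix.of fun i j => pderiv i (F j))

/-- `𝒫_{n,d}`: polynomial systems `ℂⁿ → ℂⁿ` of total degree at most `d`. -/
def PolySys (n d : ℕ) : Set (Fin n → MvPolynomial (Fin n) ℂ) :=
  {F | ∀ i, (F i).totalDegree ≤ d}

/-- `𝒥^lin_{n,d}`: systems in `𝒫_{n,d}` whose Jacobian determinant is a
nonzero constant. -/
def JlinSet (n d : ℕ) : Set (Fin n → MvPolynomial (Fin n) ℂ) :=
  {F | F ∈ PolySys n d ∧ ∃ c : ℂ, c ≠ 0 ∧ jacDet F = C c}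

/-- `𝒥_{n,d}`: systems in `𝒫_{n,d}` invertible with polynomial inverse. -/
def JSet (n d : ℕ) : Set (Fin n → MvPolynomial (Fin n) ℂ) :=
  {F | F ∈ PolySys n d ∧ ∃ G : Fin n → MvPolynomial (Fin n) ℂ,
    (∀ i, bind₁ F (G i) = X i) ∧ (∀ i, bind₁ G (F i) = X i)}

/-!
Bass–Connell–Wright degree reduction. Let `c X^(β+γ)` be a monomial of `F k₀` of degree at
least 4 with `deg β = 2`. In two new variables `u, v`, the system
`(F - c (u + X^β) (v + X^γ) e_{k₀}, u + X^β, v + X^γ)` is the composite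
`φ ∘ (F × id) ∘ ψ₁ ∘ ψ₂` of `F × id` with elementary automorphisms, so its Jacobian
determinant is a unit whenever that of `F` is, and it is invertible only if `F` is. It trades
the monomial `X^(β+γ)` for monomials of degrees 2, 3, `deg γ + 1` and `deg γ`, so the weight
`∑ 2 ^ deg m` over the monomials `m` of degree at least 4 drops, as
`2^(g+2) > 2^(g+1) + 2^g`. Induction on this weight reduces any system with unit Jacobian
determinant to one of degree at most 3.

Conversely, by the chain rule an invertible system has a unit Jacobian determinant, and the
units of `ℂ[X₁, …, Xₙ]` are the nonzero constants.
-/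

open Function

namespace MvPolynomial

variable {R : Type*} [CommRing R]

theorem notMem_vars_rename {σ τ : Type*} {f : σ → τ} {i : τ} (h : ∀ a, f a ≠ i)
    (p : MvPolynomial σ R) : i ∉ (rename f p).vars := by
  classical
  intro hi
  obtain ⟨a, -, rfl⟩ := Finset.mem_image.mp (vars_rename f p hi)
  exact h a rfl

theorem pderiv_bind₁ {σ τ : Type*} [Fintype σ] (B : σ → MvPolynomial τ R) (i : τ)
    (p : MvPolynomial σ R) :
    pderiv i (bind₁ B p) = ∑ k, bind₁ B (pderiv k p) * pderiv i (B k) := by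
  classical
  induction p using MvPolynomial.induction_on with
  | C a => simp
  | add p q hp hq => simp only [map_add, hp, hq, add_mul, Finset.sum_add_distrib]
  | mul_X p j hp =>
    simp only [map_mul, bind₁_X_right, Derivation.leibniz, pderiv_X, hp, smul_eq_mul, map_add,
      Pi.single_apply, Finset.sum_add_distrib, Finset.mul_sum, add_mul]
    simp [mul_comm, mul_assoc]

section Jacobian

variable {σ : Type*}

noncomputable def jacobian (F : σ → MvPolynomial σ R) : Matrix σ σ (MvPolynomial σ R) :=
  Matrix.of fun i j => pderiv i (F j)

-- `fun k => bind₁ B (A k)` is the composite map `A ∘ B`: this is the chain rule.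
theorem jacobian_bind₁ [Fintype σ] (A B : σ → MvPolynomial σ R) :
    jacobian (fun k => bind₁ B (A k)) = jacobian B * (jacobian A).map (bind₁ B) := by
  ext i j
  simp [jacobian, Matrix.mul_apply, pderiv_bind₁, mul_comm]

variable [DecidableEq σ]

theorem jacobian_X : jacobian (X : σ → MvPolynomial σ R) = 1 := by
  ext i j
  simp [jacobian, pderiv_X, Matrix.one_apply, Pi.single_apply, eq_comm]

variable [Fintype σ]

theorem det_jacobian_bind₁ (A B : σ → MvPolynomial σ R) :
    (jacobian fun k => bind₁ B (A k)).det = (jacobian B).det * bind₁ B (jacobian A).det := by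
  rw [jacobian_bind₁, Matrix.det_mul, AlgHom.map_det]
  rfl

theorem isUnit_det_jacobian_bind₁ {A B : σ → MvPolynomial σ R} (hA : IsUnit (jacobian A).det)
    (hB : IsUnit (jacobian B).det) : IsUnit (jacobian fun k => bind₁ B (A k)).det := by
  rw [det_jacobian_bind₁]
  exact hB.mul (hA.map _)

theorem isUnit_det_jacobian_of_bind₁_eq_X {F G : σ → MvPolynomial σ R}
    (h : ∀ i, bind₁ F (G i) = X i) : IsUnit (jacobian F).det := by
  have hFG := det_jacobian_bind₁ G F
  simp only [h, jacobian_X, Matrix.det_one] at hFG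
  exact IsUnit.of_mul_eq_one _ hFG.symm

end Jacobian

section Inverse

variable {σ τ : Type*}

theorem bijective_bind₁_iff {F : σ → MvPolynomial σ R} :
    Bijective (bind₁ F) ↔ ∃ G : σ → MvPolynomial σ R,
      (∀ i, bind₁ F (G i) = X i) ∧ (∀ i, bind₁ G (F i) = X i) := by
  constructor
  · intro h
    let e := AlgEquiv.ofBijective (bind₁ F) h
    have he : bind₁ (fun i => e.symm (X i)) = (e.symm : MvPolynomial σ R →ₐ[R] _) :=
      algHom_ext fun i => by simp
    refine ⟨fun i => e.symm (X i), fun i => e.apply_symm_apply (X i), fun i => ?_⟩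
    rw [he, ← bind₁_X_right F i]
    exact e.symm_apply_apply (X i)
  · rintro ⟨G, hFG, hGF⟩
    have hcomp {A B : σ → MvPolynomial σ R} (hAB : ∀ i, bind₁ A (B i) = X i) (p) :
        bind₁ A (bind₁ B p) = p := by
      simp [bind₁_bind₁, hAB]
    exact ⟨LeftInverse.injective (hcomp hGF), RightInverse.surjective (hcomp hFG)⟩

theorem bijective_bind₁_rename_equiv_iff (e : σ ≃ τ) (F : σ → MvPolynomial σ R) :
    Bijective (bind₁ fun t => rename e (F (e.symm t))) ↔ Bijective (bind₁ F) := by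
  have hcomm :
      (bind₁ fun t => rename e (F (e.symm t))) ∘ rename e = rename e ∘ bind₁ F := by
    ext p
    simp [bind₁_rename, rename_bind₁, comp_def]
  have hrename : Bijective (rename (R := R) e) := (renameEquiv R e).bijective
  rw [← Bijective.of_comp_iff _ hrename, hcomm, Bijective.of_comp_iff' hrename]

theorem det_jacobian_rename_equiv [Fintype σ] [DecidableEq σ] [Fintype τ] [DecidableEq τ]
    (e : σ ≃ τ) (F : σ → MvPolynomial σ R) :
    (jacobian fun t => rename e (F (e.symm t))).det = rename e (jacobian F).det := by
  have hjac : jacobian (fun t => rename e (F (e.symm t))) =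
      ((jacobian F).submatrix e.symm e.symm).map (rename e) := by
    refine Matrix.ext fun i j => ?_
    simp [jacobian, ← pderiv_rename e.injective]
  rw [hjac, AlgHom.map_det, ← Matrix.det_submatrix_equiv_self e.symm]
  rfl

end Inverse

section Elementary

variable {σ : Type*} [DecidableEq σ]

noncomputable def elementary (j : σ) (q : MvPolynomial σ R) : σ → MvPolynomial σ R :=
  update X j (X j + q)

@[simp]
theorem elementary_self (j : σ) (q : MvPolynomial σ R) : elementary j q j = X j + q :=
  update_self ..

@[simp]
theorem elementary_of_ne {i j : σ} (q : MvPolynomial σ R) (h : i ≠ j) :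
    elementary j q i = X i :=
  update_of_ne h ..

theorem bind₁_elementary_of_notMem_vars {j : σ} {p : MvPolynomial σ R} (q : MvPolynomial σ R)
    (hj : j ∉ p.vars) : bind₁ (elementary j q) p = p := by
  calc bind₁ (elementary j q) p = bind₁ X p :=
        hom_congr_vars (by ext; simp) (fun i hi _ => by simp [show i ≠ j by grind]) rfl
    _ = p := by simp

theorem bind₁_elementary_comp_neg {j : σ} {q : MvPolynomial σ R} (hj : j ∉ q.vars) :
    (bind₁ (elementary j q)).comp (bind₁ (elementary j (-q))) = AlgHom.id R _ := by
  ext i : 1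
  by_cases hi : i = j
  · subst hi
    simp [bind₁_elementary_of_notMem_vars _ hj]
  · simp [hi]

theorem bijective_bind₁_elementary {j : σ} {q : MvPolynomial σ R} (hj : j ∉ q.vars) :
    Bijective (bind₁ (elementary j q)) := by
  have hj' : j ∉ (-q).vars := by rwa [vars_neg]
  have h₁ := bind₁_elementary_comp_neg hj
  have h₂ := bind₁_elementary_comp_neg hj'
  rw [neg_neg] at h₂
  exact ⟨LeftInverse.injective (g := bind₁ (elementary j (-q))) (AlgHom.congr_fun h₂),
    RightInverse.surjective (AlgHom.congr_fun h₁)⟩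

theorem det_jacobian_elementary [Fintype σ] {j : σ} {q : MvPolynomial σ R} (hj : j ∉ q.vars) :
    (jacobian (elementary j q)).det = 1 := by
  have hjac : jacobian (elementary j q) = 1 + Matrix.replicateCol Unit (fun i => pderiv i q) *
      Matrix.replicateRow Unit (Pi.single j (1 : MvPolynomial σ R)) := by
    refine Matrix.ext fun i k => ?_
    rcases eq_or_ne k j with rfl | hk
    · simp [jacobian, Matrix.mul_apply, pderiv_X, Matrix.one_apply, Pi.single_apply, eq_comm]
    · simp [jacobian, Matrix.mul_apply, pderiv_X, Matrix.one_apply, Pi.single_apply, eq_comm,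
        hk.symm]
  rw [hjac, Matrix.det_one_add_replicateCol_mul_replicateRow, single_dotProduct, one_mul,
    pderiv_eq_zero_of_notMem_vars hj, add_zero]

end Elementary

section ExtendId

variable {σ τ : Type*}

noncomputable def extendId (F : σ → MvPolynomial σ R) :
    σ ⊕ τ → MvPolynomial (σ ⊕ τ) R :=
  Sum.elim (fun i => rename Sum.inl (F i)) (fun t => X (Sum.inr t))

theorem bind₁_extendId_rename_inl (F : σ → MvPolynomial σ R) (p : MvPolynomial σ R) :
    bind₁ (extendId (τ := τ) F) (rename Sum.inl p) = rename Sum.inl (bind₁ F p) := by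
  simp [bind₁_rename, rename_bind₁, extendId, comp_def]

theorem bind₁_elim_X_zero_bind₁_extendId (F : σ → MvPolynomial σ R)
    (p : MvPolynomial (σ ⊕ τ) R) :
    bind₁ (Sum.elim X 0) (bind₁ (extendId F) p) = bind₁ F (bind₁ (Sum.elim X 0) p) := by
  simp only [bind₁_bind₁]
  congr 1
  ext1 (i | t) <;> simp [extendId, bind₁_rename]

theorem bijective_bind₁_of_bijective_bind₁_extendId {F : σ → MvPolynomial σ R}
    (h : Bijective (bind₁ (extendId (τ := τ) F))) : Bijective (bind₁ F) := by
  -- Setting the new variables to zero retracts `rename Sum.inl` and intertwines the two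
  -- substitutions.
  have hπ (p : MvPolynomial σ R) :
      bind₁ (Sum.elim X 0) (rename (Sum.inl (β := τ)) p) = p := by
    simp [bind₁_rename]
  refine ⟨fun p q hpq => ?_, fun p => ?_⟩
  · have := congrArg (rename (Sum.inl (β := τ))) hpq
    rw [← bind₁_extendId_rename_inl, ← bind₁_extendId_rename_inl] at this
    exact rename_injective _ Sum.inl_injective (h.1 this)
  · obtain ⟨r, hr⟩ := h.2 (rename Sum.inl p)
    refine ⟨bind₁ (Sum.elim X 0) r, ?_⟩
    rw [← bind₁_elim_X_zero_bind₁_extendId, hr, hπ]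

variable [Fintype σ] [DecidableEq σ] [Fintype τ] [DecidableEq τ]

theorem det_jacobian_extendId (F : σ → MvPolynomial σ R) :
    (jacobian (extendId (τ := τ) F)).det = rename Sum.inl (jacobian F).det := by
  have hjac : jacobian (extendId (τ := τ) F) =
      Matrix.fromBlocks ((jacobian F).map (rename Sum.inl)) 0 0 1 := by
    refine Matrix.ext fun i j => ?_
    rcases i with i | i <;> rcases j with j | j <;>
      simp [jacobian, extendId, pderiv_rename Sum.inl_injective, pderiv_X, Matrix.one_apply,
        Pi.single_apply, eq_comm, pderiv_eq_zero_of_notMem_vars (notMem_vars_rename _ _)]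
  rw [hjac, Matrix.det_fromBlocks_zero₂₁, Matrix.det_one, mul_one, AlgHom.map_det]
  rfl

end ExtendId

section Excess

variable {σ τ : Type*}

def excessWeight (k : ℕ) : ℕ := if k ≤ 3 then 0 else 2 ^ k

theorem excessWeight_le (k : ℕ) : excessWeight k ≤ 2 ^ k := by
  unfold excessWeight; split_ifs <;> simp

theorem excessWeight_of_le {k : ℕ} (h : k ≤ 3) : excessWeight k = 0 := if_pos h

theorem excessWeight_of_lt {k : ℕ} (h : 3 < k) : excessWeight k = 2 ^ k := if_neg (by omega)

noncomputable def excess (p : MvPolynomial σ R) : ℕ := ∑ m ∈ p.support, excessWeight m.degree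

theorem excess_add_le (p q : MvPolynomial σ R) : excess (p + q) ≤ excess p + excess q := by
  classical
  calc excess (p + q) ≤ ∑ m ∈ p.support ∪ q.support, excessWeight m.degree :=
        Finset.sum_le_sum_of_subset support_add
    _ ≤ excess p + excess q := by rw [excess, excess, ← Finset.sum_union_inter]; omega

@[simp]
theorem excess_neg (p : MvPolynomial σ R) : excess (-p) = excess p := by
  simp [excess, support_neg]

theorem excess_sub_le (p q : MvPolynomial σ R) : excess (p - q) ≤ excess p + excess q := by
  simpa [sub_eq_add_neg] using excess_add_le p (-q)

theorem excess_monomial_le (m : σ →₀ ℕ) (c : R) :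
    excess (monomial m c) ≤ excessWeight m.degree := by
  classical
  rw [excess, support_monomial]
  split_ifs <;> simp

@[simp]
theorem excess_rename_of_injective {f : σ → τ} (hf : Injective f) (p : MvPolynomial σ R) :
    excess (rename f p) = excess p := by
  classical
  rw [excess, support_rename_of_injective hf, Finset.sum_image fun _ _ _ _ h =>
    Finsupp.mapDomain_injective hf h]
  simp [excess, Finsupp.degree_mapDomain]

theorem excess_sub_monomial_add {p : MvPolynomial σ R} {m : σ →₀ ℕ} (hm : m ∈ p.support) :
    excess (p - monomial m (coeff m p)) + excessWeight m.degree = excess p := by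
  classical
  have hsupp : (p - monomial m (coeff m p)).support = p.support.erase m := by
    ext m'
    rcases eq_or_ne m' m with rfl | h
    · simp
    · simp [coeff_monomial, h, h.symm]
  rw [excess, hsupp, Finset.sum_erase_add _ _ hm, excess]

end Excess

section Step

variable {σ : Type*} [DecidableEq σ]

-- As a map, `(x, u, v) ↦ (F x - c (u + x^β) (v + x^γ) e_{k₀}, u + x^β, v + x^γ)` with
-- `c = coeff (β + γ) (F k₀)`; see `bcwStep_inl_self` and `bcwStep_inr`.
open Sum in
noncomputable def bcwStep (F : σ → MvPolynomial σ R) (k₀ : σ) (β γ : σ →₀ ℕ) :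
    σ ⊕ Bool → MvPolynomial (σ ⊕ Bool) R := fun k =>
  bind₁ (elementary (inr true) (rename inl (monomial γ 1)))
    (bind₁ (elementary (inr false) (rename inl (monomial β 1)))
      (bind₁ (extendId F)
        (elementary (inl k₀) (-rename inr (C (coeff (β + γ) (F k₀)) * X false * X true)) k)))

variable (F : σ → MvPolynomial σ R) (k₀ : σ) (β γ : σ →₀ ℕ)

theorem bcwStep_inl_of_ne {i : σ} (h : i ≠ k₀) :
    bcwStep F k₀ β γ (Sum.inl i) = rename Sum.inl (F i) := by
  simp [bcwStep, h, extendId, bind₁_elementary_of_notMem_vars, notMem_vars_rename]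

theorem bcwStep_inl_self : bcwStep F k₀ β γ (Sum.inl k₀) = rename Sum.inl (F k₀) -
    C (coeff (β + γ) (F k₀)) * ((X (Sum.inr false) + rename Sum.inl (monomial β 1)) *
      (X (Sum.inr true) + rename Sum.inl (monomial γ 1))) := by
  simp [bcwStep, extendId, bind₁_elementary_of_notMem_vars, notMem_vars_rename]
  ring

theorem bcwStep_inr (b : Bool) : bcwStep F k₀ β γ (Sum.inr b) =
    X (Sum.inr b) + rename Sum.inl (monomial (if b then γ else β) 1) := by
  cases b <;> simp [bcwStep, extendId, bind₁_elementary_of_notMem_vars, notMem_vars_rename]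

theorem isUnit_det_jacobian_bcwStep [Fintype σ] (hF : IsUnit (jacobian F).det) :
    IsUnit (jacobian (bcwStep F k₀ β γ)).det := by
  have hE : IsUnit (jacobian (extendId (τ := Bool) F)).det := by
    rw [det_jacobian_extendId]
    exact hF.map _
  have hel {j : σ ⊕ Bool} {q : MvPolynomial (σ ⊕ Bool) R} (hj : j ∉ q.vars) :
      IsUnit (jacobian (elementary j q)).det := by
    rw [det_jacobian_elementary hj]
    exact isUnit_one
  exact isUnit_det_jacobian_bind₁ (isUnit_det_jacobian_bind₁ (isUnit_det_jacobian_bind₁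
    (hel (by rw [vars_neg]; exact notMem_vars_rename (by simp) _)) hE)
    (hel (notMem_vars_rename (by simp) _))) (hel (notMem_vars_rename (by simp) _))

theorem bijective_bind₁_of_bijective_bind₁_bcwStep
    (h : Bijective (bind₁ (bcwStep F k₀ β γ))) : Bijective (bind₁ F) := by
  have hcomp : ⇑(bind₁ (bcwStep F k₀ β γ)) =
      bind₁ (elementary (Sum.inr true) (rename Sum.inl (monomial γ 1))) ∘
      bind₁ (elementary (Sum.inr false) (rename Sum.inl (monomial β 1))) ∘
      bind₁ (extendId F) ∘ bind₁ (elementary (Sum.inl k₀)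
        (-rename Sum.inr (C (coeff (β + γ) (F k₀)) * X false * X true))) := by
    simp only [← AlgHom.coe_comp, bind₁_comp_bind₁]
    rfl
  have hel {j : σ ⊕ Bool} {q : MvPolynomial (σ ⊕ Bool) R} (hj : j ∉ q.vars) :=
    bijective_bind₁_elementary hj
  rw [hcomp, Bijective.of_comp_iff' (hel (notMem_vars_rename (by simp) _)),
    Bijective.of_comp_iff' (hel (notMem_vars_rename (by simp) _)),
    Bijective.of_comp_iff _
      (hel (by rw [vars_neg]; exact notMem_vars_rename (by simp) _))] at h
  exact bijective_bind₁_of_bijective_bind₁_extendId h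

theorem excess_bcwStep_inl_self_add_le (hm : β + γ ∈ (F k₀).support) (hβ : β.degree = 2) :
    excess (bcwStep F k₀ β γ (Sum.inl k₀)) + excessWeight (β + γ).degree ≤
      excess (F k₀) + excessWeight (γ.degree + 1) := by
  have hrest := excess_sub_monomial_add hm
  set c := coeff (β + γ) (F k₀)
  have hsplit : bcwStep F k₀ β γ (Sum.inl k₀) =
      rename Sum.inl (F k₀ - monomial (β + γ) c) -
        (monomial (.single (Sum.inr false) 1 + .single (Sum.inr true) 1) c +
          monomial (.single (Sum.inr false) 1 + γ.mapDomain Sum.inl) c +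
          monomial (β.mapDomain Sum.inl + .single (Sum.inr true) 1) c) := by
    rw [bcwStep_inl_self]
    simp only [X, rename_monomial, map_sub, Finsupp.mapDomain_add, monomial_mul, C_mul_monomial,
      mul_add, add_mul, mul_one]
    ring
  set uv := monomial (.single (Sum.inr false) 1 + .single (Sum.inr true) 1) c
  set uxγ := monomial (.single (Sum.inr false) 1 + γ.mapDomain Sum.inl) c
  set xβv := monomial (β.mapDomain Sum.inl + .single (Sum.inr true) 1) c
  have huv : excess uv ≤ _ := excess_monomial_le _ _
  have huxγ : excess uxγ ≤ _ := excess_monomial_le _ _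
  have hxβv : excess xβv ≤ _ := excess_monomial_le _ _
  simp only [map_add, Finsupp.degree_single, Finsupp.degree_mapDomain, hβ,
    excessWeight_of_le (by norm_num : 1 + 1 ≤ 3), excessWeight_of_le (by norm_num : 2 + 1 ≤ 3),
    add_comm 1] at huv huxγ hxβv hrest
  have hsum := (excess_add_le (uv + uxγ) xβv).trans
    (Nat.add_le_add_right (excess_add_le uv uxγ) _)
  have hdiff := excess_sub_le (rename Sum.inl (F k₀ - monomial (β + γ) c)) (uv + uxγ + xβv)
  rw [excess_rename_of_injective Sum.inl_injective, ← hsplit] at hdiff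
  rw [map_add, hβ, add_comm]
  omega

theorem excess_bcwStep_inr_le (b : Bool) :
    excess (bcwStep F k₀ β γ (Sum.inr b)) ≤ excessWeight (if b then γ else β).degree := by
  rw [bcwStep_inr]
  refine (excess_add_le _ _).trans ?_
  rw [excess_rename_of_injective Sum.inl_injective]
  have hX := excess_monomial_le (Finsupp.single (Sum.inr b : σ ⊕ Bool) 1) (1 : R)
  rw [Finsupp.degree_single, excessWeight_of_le (by norm_num)] at hX
  have := excess_monomial_le (if b then γ else β) (1 : R)
  exact (Nat.add_le_add hX this).trans_eq (zero_add _)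

theorem sum_excess_bcwStep_lt [Fintype σ] (hm : β + γ ∈ (F k₀).support) (hβ : β.degree = 2)
    (hγ : 2 ≤ γ.degree) : ∑ k, excess (bcwStep F k₀ β γ k) < ∑ k, excess (F k) := by
  have hinl : ∑ i, excess (bcwStep F k₀ β γ (Sum.inl i)) + excessWeight (β + γ).degree ≤
      ∑ i, excess (F i) + excessWeight (γ.degree + 1) := by
    rw [← Finset.add_sum_erase _ _ (Finset.mem_univ k₀),
      ← Finset.add_sum_erase _ _ (Finset.mem_univ k₀),
      Finset.sum_congr rfl fun i hi => by
        rw [bcwStep_inl_of_ne _ _ _ _ (Finset.ne_of_mem_erase hi),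
          excess_rename_of_injective Sum.inl_injective]]
    have := excess_bcwStep_inl_self_add_le F k₀ β γ hm hβ
    omega
  have hfalse := excess_bcwStep_inr_le F k₀ β γ false
  have htrue := excess_bcwStep_inr_le F k₀ β γ true
  simp only [Bool.false_eq_true, if_false, if_true, hβ,
    excessWeight_of_le (by norm_num : 2 ≤ 3)] at hfalse htrue
  rw [map_add, hβ, excessWeight_of_lt (by omega)] at hinl
  have h₁ := excessWeight_le (γ.degree + 1)
  have h₂ := excessWeight_le γ.degree
  have h₃ : 0 < 2 ^ γ.degree := Nat.two_pow_pos _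
  rw [Fintype.sum_sum_type, Fintype.sum_bool]
  rw [pow_add, pow_succ] at *
  omega

end Step

theorem bijective_bind₁_of_isUnit_det_jacobian.{u}
    (hcubic : ∀ (σ : Type u) [Fintype σ] [DecidableEq σ] (F : σ → MvPolynomial σ R),
      (∀ i, (F i).totalDegree ≤ 3) → IsUnit (jacobian F).det → Bijective (bind₁ F))
    {σ : Type u} [Fintype σ] [DecidableEq σ] (F : σ → MvPolynomial σ R)
    (hF : IsUnit (jacobian F).det) : Bijective (bind₁ F) := by
  induction hN : ∑ k, excess (F k) using Nat.strong_induction_on generalizing σ with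
  | _ N ih =>
  by_cases hdeg : ∀ i, (F i).totalDegree ≤ 3
  · exact hcubic σ F hdeg hF
  obtain ⟨k₀, hk₀⟩ := not_forall.mp hdeg
  obtain ⟨m, hm, hmdeg⟩ : ∃ m ∈ (F k₀).support, 3 < m.degree := by
    rw [not_le, totalDegree, Finset.lt_sup_iff] at hk₀
    exact hk₀
  obtain ⟨β, hβm, hβ⟩ := Finsupp.exists_le_degree_eq m 2 (by omega)
  obtain ⟨γ, rfl⟩ := le_iff_exists_add.mp hβm
  have hγ : 2 ≤ γ.degree := by rw [map_add, hβ] at hmdeg; omega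
  exact bijective_bind₁_of_bijective_bind₁_bcwStep F k₀ β γ <|
    ih _ (hN ▸ sum_excess_bcwStep_lt F k₀ β γ hm hβ hγ) _
      (isUnit_det_jacobian_bcwStep F k₀ β γ hF) rfl

end MvPolynomial

theorem mem_JlinSet_iff {n d : ℕ} {F : Fin n → MvPolynomial (Fin n) ℂ} :
    F ∈ JlinSet n d ↔ F ∈ PolySys n d ∧ IsUnit (jacobian F).det := by
  simp only [JlinSet, isUnit_iff_eq_C_of_isReduced, isUnit_iff_ne_zero]
  rfl

theorem mem_JSet_iff {n d : ℕ} {F : Fin n → MvPolynomial (Fin n) ℂ} :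
    F ∈ JSet n d ↔ F ∈ PolySys n d ∧ Bijective (bind₁ F) := by
  rw [bijective_bind₁_iff]
  rfl

theorem bijective_bind₁_of_totalDegree_le_three
    (h : ∀ n : ℕ, 1 ≤ n → JlinSet n 3 = JSet n 3) {σ : Type} [Fintype σ] [DecidableEq σ]
    (F : σ → MvPolynomial σ ℂ)
    (hdeg : ∀ i, (F i).totalDegree ≤ 3) (hF : IsUnit (jacobian F).det) :
    Bijective (bind₁ F) := by
  rcases isEmpty_or_nonempty σ with hσ | hσ
  · rw [algHom_ext (f := bind₁ F) (g := AlgHom.id ℂ _) isEmptyElim]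
    exact Function.bijective_id
  let e := Fintype.equivFin σ
  have hmem : (fun t => rename e (F (e.symm t))) ∈ JlinSet (Fintype.card σ) 3 := by
    refine mem_JlinSet_iff.mpr ⟨fun t => (totalDegree_rename_le _ _).trans (hdeg _), ?_⟩
    rw [det_jacobian_rename_equiv]
    exact hF.map _
  rw [h _ Fintype.card_pos, mem_JSet_iff, bijective_bind₁_rename_equiv_iff] at hmem
  exact hmem.2

/-- **Bass–Connell–Wright reduction to degree 3**: if `𝒥^lin_{n,3} = 𝒥_{n,3}`
for every `n ≥ 1`, then `𝒥^lin_{n,d} = 𝒥_{n,d}` for every `n ≥ 1` and `d ≥ 1`. -/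
theorem cubic_reduction
    (h : ∀ n : ℕ, 1 ≤ n → JlinSet n 3 = JSet n 3) :
    ∀ n : ℕ, 1 ≤ n → ∀ d : ℕ, 1 ≤ d → JlinSet n d = JSet n d := by
  intro n _ d _
  ext F
  rw [mem_JlinSet_iff, mem_JSet_iff]
  refine and_congr_right fun _ => ⟨bijective_bind₁_of_isUnit_det_jacobian
    (fun _ _ _ => bijective_bind₁_of_totalDegree_le_three h) F, fun hF => ?_⟩
  obtain ⟨G, hFG, -⟩ := bijective_bind₁_iff.mp hF
  exact isUnit_det_jacobian_of_bind₁_eq_X hFG
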